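/- Let z : ZMod (2t) → ℤ satisfy |z(k+1) - z(k)| = 1 and z(k+t) = t - z(k) for all k, and let ẑ(k) = ∑_{j=0}^{2t-1} z(j)·exp(-πi·k·j/t). Then the number of local minima of z equals t - (1/(4t))·∑_{k=0}^{2t-1} |ẑ(k)|²·sin²(πk/t). -/

import Mathlib

/-- Number of local minima of a `2t`-periodic integer sequence. -/
def minimaCount (t : ℕ) (z : ZMod (2*t) → ℤ) : ℕ :=
  ((Finset.range (2*t)).filter (fun k : ℕ =>
    z ((k : ZMod (2*t)) - 1) > z (k : ZMod (2*t)) ∧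
    z ((k : ZMod (2*t)) + 1) > z (k : ZMod (2*t)))).card

/-- Discrete Fourier transform of a `2t`-periodic sequence,
using the primitive `2t`-th root of unity `exp(-πi/t)`. -/
noncomputable def dft (t : ℕ) (z : ZMod (2*t) → ℂ) (k : ℕ) : ℂ :=
  ∑ j ∈ Finset.range (2*t),
    z (j : ZMod (2*t)) * Complex.exp (-(Real.pi : ℂ) * Complex.I * k * j / t)

/-!
Write `a = z k - z (k - 1)` and `b = z (k + 1) - z k`, both `±1`. A local minimum at `k` has
indicator `(1 - a)(1 + b)/4`, while `(z (k + 1) - z (k - 1))² = (a + b)² = 2 + 2ab`; summing over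
the cycle, where `∑ (b - a)` telescopes to `0`, gives `8 · #minima = 8t - ∑ₖ (z (k + 1) - z (k - 1))²`,
i.e. the quadratic form of `2I - C² - C⁻²`. The centred difference `z (k + 1) - z (k - 1)` has Fourier
transform `(ωᵏ - ω⁻ᵏ) ẑ(k) = 2i sin(πk/t) ẑ(k)`, so by Plancherel that quadratic form equals
`(2/t) ∑ₖ |ẑ(k)|² sin²(πk/t)`.
-/

open Finset Complex ComplexConjugate
open scoped ZMod Real

theorem eight_mul_ite_lt_and_lt {p q r : ℤ} (hpq : |q - p| = 1) (hqr : |r - q| = 1) :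
    8 * (if q < p ∧ q < r then 1 else 0) = 4 - (r - p) ^ 2 + 2 * ((r - q) - (q - p)) := by
  rw [show r - p = (r - q) + (q - p) by ring]
  rcases (abs_eq zero_le_one).1 hpq with h₁ | h₁ <;>
    rcases (abs_eq zero_le_one).1 hqr with h₂ | h₂ <;>
    · rw [h₁, h₂]; split_ifs <;> omega

theorem eight_mul_card_localMin {N : ℕ} [NeZero N] (z : ZMod N → ℤ)
    (hstep : ∀ k, |z (k + 1) - z k| = 1) :
    8 * (#{k | z k < z (k - 1) ∧ z k < z (k + 1)} : ℤ) =
      4 * N - ∑ k, (z (k + 1) - z (k - 1)) ^ 2 := by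
  have htelescope : ∑ k, ((z (k + 1) - z k) - (z k - z (k - 1))) = 0 := by
    rw [sum_sub_distrib, sub_eq_zero]
    exact Fintype.sum_equiv (Equiv.addRight 1) _ _ fun k ↦ by simp
  have hpoint : ∀ k, 8 * (if z k < z (k - 1) ∧ z k < z (k + 1) then 1 else 0) =
      4 - (z (k + 1) - z (k - 1)) ^ 2 + 2 * ((z (k + 1) - z k) - (z k - z (k - 1))) :=
    fun k ↦ eight_mul_ite_lt_and_lt (by simpa using hstep (k - 1)) (hstep k)
  rw [card_filter, Nat.cast_sum, mul_sum]
  push_cast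
  rw [sum_congr rfl fun k _ ↦ hpoint k, sum_add_distrib, ← mul_sum, htelescope, sum_sub_distrib,
    sum_const, card_univ, ZMod.card, nsmul_eq_mul]
  ring

namespace ZMod

variable {N : ℕ} [NeZero N]

theorem sum_range_natCast {M : Type*} [AddCommMonoid M] (f : ZMod N → M) :
    ∑ k ∈ range N, f k = ∑ k, f k := by
  refine sum_nbij' (↑) ZMod.val (fun _ _ ↦ mem_univ _) (fun a _ ↦ mem_range.2 a.val_lt)
    (fun k hk ↦ ?_) (fun a _ ↦ natCast_zmod_val a) (fun _ _ ↦ rfl)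
  rw [val_natCast, Nat.mod_eq_of_lt (mem_range.1 hk)]

theorem conj_stdAddChar (a : ZMod N) : conj (stdAddChar a) = stdAddChar (-a) := by
  rw [stdAddChar_apply, stdAddChar_apply, AddChar.map_neg_eq_inv, Circle.coe_inv_eq_conj]

theorem stdAddChar_sub_stdAddChar_neg (j : ℤ) :
    stdAddChar (j : ZMod N) - stdAddChar (-j : ZMod N) = 2 * I * Real.sin (2 * π * j / N) := by
  have harg : 2 * π * I * j / N = ((2 * π * j / N : ℝ) : ℂ) * I := by push_cast; ring
  rw [← Int.cast_neg, stdAddChar_coe, stdAddChar_coe, Int.cast_neg, mul_neg, neg_div, harg,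
    ← neg_mul, ← cos_add_sin_I, ← cos_sub_sin_I, ofReal_sin]
  ring

theorem sum_norm_sq_dft (Φ : ZMod N → ℂ) :
    ∑ k, ‖𝓕 Φ k‖ ^ 2 = N * ∑ j, ‖Φ j‖ ^ 2 := by
  have horth : ∀ j l : ZMod N, ∑ k, stdAddChar (k * (l - j)) = if j = l then (N : ℂ) else 0 := by
    intro j l
    simp [AddChar.sum_mulShift _ (isPrimitive_stdAddChar N), sub_eq_zero, eq_comm]
  have hterm : ∀ j l k : ZMod N,
      stdAddChar (-(j * k)) * Φ j * (stdAddChar (- -(l * k)) * conj (Φ l)) =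
        Φ j * conj (Φ l) * stdAddChar (k * (l - j)) := by
    intro j l k
    rw [mul_mul_mul_comm, ← AddChar.map_add_eq_mul]
    ring_nf
  apply ofReal_injective
  push_cast
  simp only [← mul_conj', dft_apply, smul_eq_mul, map_sum, map_mul, conj_stdAddChar, sum_mul_sum]
  rw [sum_comm, mul_sum]
  refine sum_congr rfl fun j _ ↦ ?_
  rw [sum_comm]
  simp_rw [hterm, ← mul_sum, horth, mul_ite, mul_zero, sum_ite_eq, mem_univ, if_true]
  ring

theorem dft_comp_add_const (Φ : ZMod N → ℂ) (c k : ZMod N) :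
    𝓕 (fun j ↦ Φ (j + c)) k = stdAddChar (c * k) * 𝓕 Φ k := by
  simp only [dft_apply, smul_eq_mul, mul_sum]
  refine Fintype.sum_equiv (Equiv.addRight c) _ _ fun j ↦ ?_
  rw [Equiv.coe_addRight, ← mul_assoc, ← AddChar.map_add_eq_mul]
  ring_nf

theorem dft_comp_add_sub_comp_sub (Φ : ZMod N → ℂ) (c k : ZMod N) :
    𝓕 (fun j ↦ Φ (j + c) - Φ (j - c)) k =
      (stdAddChar (c * k) - stdAddChar (-(c * k))) * 𝓕 Φ k := by
  have h : (fun j ↦ Φ (j + c) - Φ (j - c)) = (fun j ↦ Φ (j + c)) - fun j ↦ Φ (j + -c) := by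
    simp only [sub_eq_add_neg]; rfl
  rw [h, map_sub, Pi.sub_apply, dft_comp_add_const, dft_comp_add_const, sub_mul, neg_mul]

end ZMod

theorem minimaCount_eq_card (t : ℕ) [NeZero t] (z : ZMod (2 * t) → ℤ) :
    minimaCount t z = #{k | z k < z (k - 1) ∧ z k < z (k + 1)} := by
  rw [minimaCount, card_filter, card_filter,
    ZMod.sum_range_natCast fun k ↦ if z k < z (k - 1) ∧ z k < z (k + 1) then 1 else 0]

theorem dft_eq_zmod_dft (t : ℕ) [NeZero t] (w : ZMod (2 * t) → ℂ) (k : ℕ) :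
    dft t w k = 𝓕 w k := by
  rw [dft, ZMod.dft_apply, ← ZMod.sum_range_natCast]
  refine sum_congr rfl fun j _ ↦ ?_
  have hcast : -((j : ZMod (2 * t)) * k) = Int.cast (-((j : ℤ) * k)) := by push_cast; rfl
  have ht : (t : ℂ) ≠ 0 := Nat.cast_ne_zero.2 (NeZero.ne t)
  rw [smul_eq_mul, mul_comm, hcast, ZMod.stdAddChar_coe]
  congr 2
  push_cast
  field_simp

theorem sum_norm_sq_dft_mul_sin_sq (t : ℕ) [NeZero t] (w : ZMod (2 * t) → ℂ) :
    ∑ k ∈ range (2 * t), ‖dft t w k‖ ^ 2 * Real.sin (π * k / t) ^ 2 =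
      t / 2 * ∑ j, ‖w (j + 1) - w (j - 1)‖ ^ 2 := by
  have hpoint : ∀ k : ℕ, ‖dft t w k‖ ^ 2 * Real.sin (π * k / t) ^ 2 =
      ‖𝓕 (fun j ↦ w (j + 1) - w (j - 1)) k‖ ^ 2 / 4 := by
    intro k
    have hchar := ZMod.stdAddChar_sub_stdAddChar_neg (N := 2 * t) k
    have hsin : 2 * π * (k : ℤ) / (2 * t : ℕ) = π * k / t := by
      have : (t : ℝ) ≠ 0 := Nat.cast_ne_zero.2 (NeZero.ne t)
      push_cast; field_simp
    simp only [Int.cast_natCast] at hchar hsin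
    rw [ZMod.dft_comp_add_sub_comp_sub, one_mul, hchar, hsin, dft_eq_zmod_dft]
    simp only [norm_mul, norm_I, norm_real, Real.norm_eq_abs, Complex.norm_ofNat, mul_pow, sq_abs]
    ring
  rw [sum_congr rfl fun k _ ↦ hpoint k,
    ZMod.sum_range_natCast fun k ↦ ‖𝓕 (fun j ↦ w (j + 1) - w (j - 1)) k‖ ^ 2 / 4, ← sum_div,
    ZMod.sum_norm_sq_dft]
  push_cast
  ring

theorem minima_eq_sin_formula_general (t : ℕ) (z : ZMod (2*t) → ℤ)
    (hstep : ∀ k : ZMod (2*t), |z (k + 1) - z k| = 1) :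
    (minimaCount t z : ℝ) =
      (t : ℝ) - (1/(4*(t:ℝ))) * ∑ k ∈ Finset.range (2*t),
        (‖dft t (fun j => (z j : ℂ)) k‖)^2 * (Real.sin (Real.pi * k / t))^2 := by
  rcases eq_or_ne t 0 with rfl | ht
  · simp [minimaCount]
  have : NeZero t := ⟨ht⟩
  have hcount := congrArg (Int.cast : ℤ → ℝ) (eight_mul_card_localMin z hstep)
  have hnorm : ∑ j, ‖(z (j + 1) : ℂ) - z (j - 1)‖ ^ 2 = ∑ j, ((z (j + 1) - z (j - 1)) ^ 2 : ℝ) :=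
    sum_congr rfl fun j _ ↦ by rw [← Int.cast_sub, Complex.norm_intCast, sq_abs, Int.cast_sub]
  rw [minimaCount_eq_card, sum_norm_sq_dft_mul_sin_sq, hnorm]
  push_cast at hcount
  field_simp
  linarith

theorem minima_eq_sin_formula (t : ℕ) (ht : 2 ≤ t) (z : ZMod (2*t) → ℤ)
    (hstep : ∀ k : ZMod (2*t), |z (k + 1) - z k| = 1)
    (hant : ∀ k : ZMod (2*t), z (k + (t : ZMod (2*t))) = (t : ℤ) - z k) :
    (minimaCount t z : ℝ) =
      (t : ℝ) - (1/(4*(t:ℝ))) * ∑ k ∈ Finset.range (2*t),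
        (‖dft t (fun j => (z j : ℂ)) k‖)^2 * (Real.sin (Real.pi * k / t))^2 :=
  minima_eq_sin_formula_general t z hstep
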